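/- Let N = (V, A, c) be a network and x, y, z ∈ V with y ≠ z. Then λ^N_{yz}(x) = φ^N_{yz}(x) = δ^N_{yz}(x), i.e. the three quantities — the minimum number of paths through x in a maximum sequence of arc-disjoint paths from y to z, the drop φ^N_{yz} − φ^{N_x}_{yz} in maximum flow value when the capacities of arcs incident to x are set to zero, and the minimum flow through x over all maximum flows from y to z — all coincide. -/

import Mathlib

/-!
Networks on the complete digraph: capacities `c : V → V → ℕ` with no loops
(arcs are ordered pairs of distinct vertices; loops are given capacity 0).
-/

structure Network (V : Type*) where
  c : V → V → ℕ
  no_loop : ∀ v, c v v = 0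

namespace NetFlow

variable {V : Type*} [Fintype V] [DecidableEq V]

/-- `f` is a flow from `y` to `z` in `N`. -/
def IsFlow (N : Network V) (y z : V) (f : V → V → ℕ) : Prop :=
  (∀ u v, f u v ≤ N.c u v) ∧
  (∀ x, x ≠ y → x ≠ z → ∑ u, f u x = ∑ u, f x u)

/-- The value of a flow from `y`. -/
def flowValue (f : V → V → ℕ) (y : V) : ℤ :=
  (∑ u, (f y u : ℤ)) - ∑ u, (f u y : ℤ)

/-- The maximum flow value `φ^N_{yz}`. -/
noncomputable def maxFlowValue (N : Network V) (y z : V) : ℕ :=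
  sSup {m : ℕ | ∃ f, IsFlow N y z f ∧ flowValue f y = (m : ℤ)}

/-- `f` is a maximum flow from `y` to `z` in `N`. -/
def IsMaxFlow (N : Network V) (y z : V) (f : V → V → ℕ) : Prop :=
  IsFlow N y z f ∧ flowValue f y = (maxFlowValue N y z : ℤ)

/-- The network `N_X`: capacities of arcs incident to `X` are set to zero. -/
def removeVerts (N : Network V) (X : Finset V) : Network V where
  c u v := if u ∈ X ∨ v ∈ X then 0 else N.c u v
  no_loop v := by simp [N.no_loop v]

/-- `φ^N_{yz}(X) = φ^N_{yz} - φ^{N_X}_{yz}`. -/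
noncomputable def phiDrop (N : Network V) (y z : V) (X : Finset V) : ℤ :=
  (maxFlowValue N y z : ℤ) - (maxFlowValue (removeVerts N X) y z : ℤ)

/-- The (consecutive) arcs of a list of vertices. -/
def pathArcs (p : List V) : List (V × V) := p.zip p.tail

/-- `p` is a path from `y` to `z` in `N`: at least two distinct vertices, starting at `y`,
ending at `z`, with all consecutive arcs of positive capacity. -/
def IsPath (N : Network V) (y z : V) (p : List V) : Prop :=
  2 ≤ p.length ∧ p.Nodup ∧ p.head? = some y ∧ p.getLast? = some z ∧
    p.Chain' fun u v => 1 ≤ N.c u v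

/-- `p` is a cycle in `N`. -/
def IsCycle (N : Network V) (p : List V) : Prop :=
  3 ≤ p.length ∧ p.dropLast.Nodup ∧ p.head? = p.getLast? ∧
    p.Chain' fun u v => 1 ≤ N.c u v

/-- A sequence of arc-disjoint paths from `y` to `z` in `N`: each component is a path, and
each arc `a` is used by at most `c a` components. -/
def IsPathSeq (N : Network V) (y z : V) (γ : List (List V)) : Prop :=
  (∀ p ∈ γ, IsPath N y z p) ∧
  ∀ u v : V, γ.countP (fun p => decide ((u, v) ∈ pathArcs p)) ≤ N.c u v

/-- `λ^N_{yz}`: the maximum length of a sequence of arc-disjoint paths from `y` to `z`. -/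
noncomputable def maxSeqLen (N : Network V) (y z : V) : ℕ :=
  sSup {m : ℕ | ∃ γ : List (List V), IsPathSeq N y z γ ∧ γ.length = m}

/-- `M^N_{yz}`: the sequences of arc-disjoint paths from `y` to `z` of maximum length. -/
def MaxSeqs (N : Network V) (y z : V) : Set (List (List V)) :=
  {γ | IsPathSeq N y z γ ∧ γ.length = maxSeqLen N y z}

/-- `l_X(γ)`: the number of components of `γ` having a vertex in `X`. -/
def lX (X : Finset V) (γ : List (List V)) : ℕ :=
  γ.countP fun p => p.any fun x => decide (x ∈ X)

/-- `λ^N_{yz}(X)`: the minimum of `l_X` over maximum-length sequences of arc-disjoint paths. -/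
noncomputable def lambdaX (N : Network V) (y z : V) (X : Finset V) : ℕ :=
  sInf {n : ℕ | ∃ γ ∈ MaxSeqs N y z, lX X γ = n}

/-- The flow through a vertex: `f(x) = Σ_{a exiting x} f(a)` if `x ∉ {y,z}`, `v(f)` otherwise. -/
def vertexFlow (f : V → V → ℕ) (y z x : V) : ℤ :=
  if x = y ∨ x = z then flowValue f y else ∑ u, (f x u : ℤ)

/-- `δ^N_{yz}(X)`: the minimum of `f(X) = Σ_{x∈X} f(x)` over maximum flows `f`. -/
noncomputable def deltaX (N : Network V) (y z : V) (X : Finset V) : ℕ :=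
  sInf {n : ℕ | ∃ f, IsMaxFlow N y z f ∧ (∑ x ∈ X, vertexFlow f y z x) = (n : ℤ)}

/-- The flow `f_γ` associated with a sequence of arc-disjoint paths. -/
def seqFlow (γ : List (List V)) (u v : V) : ℕ :=
  γ.countP fun p => decide ((u, v) ∈ pathArcs p)

/-- The path (or cycle) function `χ_p` of a path or cycle `p`. -/
def chi (p : List V) (u v : V) : ℕ := (pathArcs p).count (u, v)

/-- `(γ, w)` is a decomposition of the flow `f`: `γ` is a sequence of `v(f)` paths from `y`
to `z`, `w` a sequence of cycles, and `f = Σ_j χ_{γ_j} + Σ_j χ_{w_j}`. -/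
def IsDecomposition (N : Network V) (y z : V) (f : V → V → ℕ)
    (γ w : List (List V)) : Prop :=
  (∀ p ∈ γ, IsPath N y z p) ∧ (∀ q ∈ w, IsCycle N q) ∧
  (γ.length : ℤ) = flowValue f y ∧
  ∀ u v : V, f u v = (γ.map fun p => chi p u v).sum + (w.map fun q => chi q u v).sum

/-- The forward arcs of a generalized path given by vertices `p` and directions `d`. -/
def forwardArcs (p : List V) (d : List Bool) : List (V × V) :=
  ((p.zip p.tail).zip d).filterMap fun e => if e.2 then some e.1 else none

/-- The backward arcs of a generalized path given by vertices `p` and directions `d`. -/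
def backwardArcs (p : List V) (d : List Bool) : List (V × V) :=
  ((p.zip p.tail).zip d).filterMap fun e => if e.2 then none else some (e.1.2, e.1.1)

/-- `(p, d)` is a generalized path from `y` to `z`: distinct vertices `x_1 = y, …, x_m = z`
(`m ≥ 2`), the `i`-th arc being `(x_i, x_{i+1})` (forward, `d_i = true`) or `(x_{i+1}, x_i)`
(backward, `d_i = false`). -/
def IsGenPath (y z : V) (p : List V) (d : List Bool) : Prop :=
  2 ≤ p.length ∧ p.Nodup ∧ p.head? = some y ∧ p.getLast? = some z ∧
    d.length + 1 = p.length

/-- `(p, d)` is an augmenting path for `f` from `y` to `z` in `N`. -/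
def IsAugPath (N : Network V) (y z : V) (f : V → V → ℕ)
    (p : List V) (d : List Bool) : Prop :=
  IsGenPath y z p d ∧
  (∀ a ∈ forwardArcs p d, f a.1 a.2 < N.c a.1 a.2) ∧
  (∀ a ∈ backwardArcs p d, 1 ≤ f a.1 a.2)

/-- `χ_σ` for a generalized path `σ = (p, d)`: `+1` on forward arcs, `-1` on backward arcs. -/
def chiGen (p : List V) (d : List Bool) (u v : V) : ℤ :=
  ((forwardArcs p d).count (u, v) : ℤ) - ((backwardArcs p d).count (u, v) : ℤ)

/-- The full flow vitality group centrality measure `φ^N(X)`. -/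
noncomputable def phiGC (N : Network V) (X : Finset V) : ℝ :=
  ∑ a ∈ Finset.univ.filter (fun a : V × V => a.1 ≠ a.2 ∧ 0 < maxFlowValue N a.1 a.2),
    (phiDrop N a.1 a.2 X : ℝ) / (maxFlowValue N a.1 a.2 : ℝ)

/-- The full flow betweenness group centrality measure `λ^N(X)`. -/
noncomputable def lambdaGC (N : Network V) (X : Finset V) : ℝ :=
  ∑ a ∈ Finset.univ.filter (fun a : V × V => a.1 ≠ a.2 ∧ 0 < maxFlowValue N a.1 a.2),
    (lambdaX N a.1 a.2 X : ℝ) / (maxFlowValue N a.1 a.2 : ℝ)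

end NetFlow

/-!
Write `φ` and `φ'` for the maximum flow values from `y` to `z` in `N` and in `N_x`.
Deleting the paths through `x` from a maximum sequence of arc-disjoint paths leaves a sequence
in `N_x`, so every maximum sequence has at least `φ - φ'` paths through `x`. A maximum flow `f`
contains a maximum sequence of paths, at most `f(x)` of which meet `x`, so also `f(x) ≥ φ - φ'`.
Conversely, a maximum flow of `N_x` does not use `x`, and augmenting it `φ - φ'` times along
residual paths raises the outflow of `x` by at most one each time: this gives a maximum flow `f`
with `f(x) ≤ φ - φ'`, whose paths meet `x` at most `φ - φ'` times. When `x ∈ {y, z}`, `φ' = 0`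
and all three quantities equal `φ`.

Both max-flow facts used (a flow without a residual path from `y` to `z` is maximum; a flow of
positive value has a path from `y` to `z` in its support) come from the cut identity
`v(f) = f(S, Sᶜ) - f(Sᶜ, S)` applied to the set `S` of vertices reachable from `y`.
-/

lemma natCast_sInf_eq {S : Set ℕ} {m : ℤ} (hS : ∃ n ∈ S, (n : ℤ) ≤ m) (hm : ∀ n ∈ S, m ≤ n) :
    ((sInf S : ℕ) : ℤ) = m := by
  obtain ⟨n, hn, hnm⟩ := hS
  have hnm : (n : ℤ) = m := le_antisymm hnm (hm n hn)
  have hleast : IsLeast S n := ⟨hn, fun k hk => by exact_mod_cast hnm ▸ hm k hk⟩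
  rw [hleast.csInf_eq, hnm]

lemma List.exists_nodup_isChain_cons_of_relationReflTransGen {α : Type*} {R : α → α → Prop}
    {a b : α} (h : Relation.ReflTransGen R a b) :
    ∃ l, (a :: l).IsChain R ∧ (a :: l).Nodup ∧ (a :: l).getLast? = some b := by
  refine Relation.ReflTransGen.head_induction_on h
    ⟨[], .singleton _, List.nodup_singleton _, rfl⟩ ?_
  rintro c d hcd - ⟨l, hc, hnd, hl⟩
  by_cases hmem : c ∈ d :: l
  · obtain ⟨l₁, l₂, heq⟩ := List.append_of_mem hmem
    rw [heq] at hc hnd hl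
    refine ⟨l₂, hc.right_of_append, hnd.sublist (List.sublist_append_right _ _), ?_⟩
    simpa [List.getLast?_append] using hl
  · exact ⟨d :: l, hc.cons_cons hcd, List.nodup_cons.2 ⟨hmem, hnd⟩, by simpa using hl⟩

namespace NetFlow

open Finset

variable {V : Type*}

section Paths

lemma pathArcs_cons_cons (a b : V) (l : List V) :
    pathArcs (a :: b :: l) = (a, b) :: pathArcs (b :: l) :=
  rfl

lemma map_fst_pathArcs : ∀ p : List V, (pathArcs p).map Prod.fst = p.dropLast
  | [] | [_] => rfl
  | a :: b :: l => by
    rw [pathArcs_cons_cons, List.map_cons, map_fst_pathArcs (b :: l)]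
    rfl

lemma map_snd_pathArcs : ∀ p : List V, (pathArcs p).map Prod.snd = p.tail
  | [] | [_] => rfl
  | a :: b :: l => by
    rw [pathArcs_cons_cons, List.map_cons, map_snd_pathArcs (b :: l)]
    rfl

lemma mem_of_mem_pathArcs {p : List V} {u v : V} (h : (u, v) ∈ pathArcs p) : u ∈ p ∧ v ∈ p :=
  ⟨(List.of_mem_zip h).1, List.mem_of_mem_tail (List.of_mem_zip h).2⟩

lemma rel_of_mem_pathArcs {R : V → V → Prop} :
    ∀ {p : List V}, p.IsChain R → ∀ {u v : V}, (u, v) ∈ pathArcs p → R u v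
  | [], _, _, _, h | [_], _, _, _, h => by simp [pathArcs] at h
  | a :: b :: l, hc, u, v, h => by
    rw [List.isChain_cons_cons] at hc
    rcases List.mem_cons.1 (pathArcs_cons_cons a b l ▸ h) with h | h
    · obtain ⟨rfl, rfl⟩ := Prod.mk.inj h
      exact hc.1
    · exact rel_of_mem_pathArcs hc.2 h

lemma isPath_of_isChain {N : Network V} {y z : V} (hyz : y ≠ z) {l : List V}
    (hc : (y :: l).IsChain fun u v => 1 ≤ N.c u v) (hnd : (y :: l).Nodup)
    (hz : (y :: l).getLast? = some z) : IsPath N y z (y :: l) := by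
  refine ⟨?_, hnd, rfl, hz, hc⟩
  rcases l with _ | ⟨b, l⟩
  · exact absurd (by simpa using hz) hyz
  · simp

variable [DecidableEq V]

lemma chi_eq_ite {p : List V} (hp : p.Nodup) (u v : V) :
    chi p u v = if (u, v) ∈ pathArcs p then 1 else 0 :=
  List.Nodup.count <|
    .of_map Prod.fst (map_fst_pathArcs p ▸ hp.sublist (List.dropLast_sublist p))

lemma chi_pair (a b u v : V) : chi [a, b] u v = if u = a ∧ v = b then 1 else 0 := by
  simp only [chi, pathArcs, List.tail_cons, List.zip_cons_cons, List.zip_nil_right,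
    List.count_singleton, beq_iff_eq, Prod.ext_iff]
  split_ifs <;> simp_all

lemma seqFlow_cons {p : List V} (hp : p.Nodup) (γ : List (List V)) :
    seqFlow (p :: γ) = chi p + seqFlow γ := by
  funext u v
  simp [seqFlow, List.countP_cons, chi_eq_ite hp, add_comm]

lemma IsPathSeq.filter_avoiding {N : Network V} {y z : V} {γ : List (List V)}
    (hγ : IsPathSeq N y z γ) (X : Finset V) :
    IsPathSeq (removeVerts N X) y z (γ.filter fun p => !p.any fun x => decide (x ∈ X)) := by
  have hmem : ∀ p ∈ γ.filter (fun p => !p.any fun x => decide (x ∈ X)),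
      p ∈ γ ∧ ∀ v ∈ p, v ∉ X := by
    simp [List.mem_filter]
  constructor
  · intro p hp
    obtain ⟨hpγ, hpX⟩ := hmem p hp
    obtain ⟨hlen, hnd, hy, hz, hc⟩ := hγ.1 p hpγ
    refine ⟨hlen, hnd, hy, hz, hc.imp_of_mem_imp fun u v hu hv h => ?_⟩
    simpa [removeVerts, hpX u hu, hpX v hv] using h
  · intro u v
    by_cases huv : u ∈ X ∨ v ∈ X
    · refine (List.countP_eq_zero.2 fun p hp harc => ?_).trans_le (Nat.zero_le _)
      obtain ⟨hu, hv⟩ := mem_of_mem_pathArcs (of_decide_eq_true harc)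
      obtain ⟨-, hpX⟩ := hmem p hp
      exact huv.elim (hpX u hu) (hpX v hv)
    · simp only [removeVerts, if_neg huv]
      exact List.filter_sublist.countP_le.trans (hγ.2 u v)

end Paths

variable [Fintype V]

section NetOutflow

def outflow (f : V → V → ℕ) (v : V) : ℕ := ∑ u, f v u

def inflow (f : V → V → ℕ) (v : V) : ℕ := ∑ u, f u v

def netOutflow (f : V → V → ℕ) (v : V) : ℤ := outflow f v - inflow f v

lemma flowValue_eq_netOutflow (f : V → V → ℕ) (y : V) : flowValue f y = netOutflow f y := by
  simp [flowValue, netOutflow, outflow, inflow]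

lemma outflow_mono {f g : V → V → ℕ} (h : f ≤ g) (v : V) : outflow f v ≤ outflow g v :=
  sum_le_sum fun u _ => h v u

lemma outflow_add (f g : V → V → ℕ) (v : V) :
    outflow (f + g) v = outflow f v + outflow g v :=
  sum_add_distrib

lemma netOutflow_add (f g : V → V → ℕ) (v : V) :
    netOutflow (f + g) v = netOutflow f v + netOutflow g v := by
  simp only [netOutflow, outflow_add, inflow, Pi.add_apply, sum_add_distrib]
  push_cast
  ring

lemma netOutflow_sub {f g : V → V → ℕ} (h : g ≤ f) (v : V) :
    netOutflow (f - g) v = netOutflow f v - netOutflow g v := by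
  have hsum := netOutflow_add (f - g) g v
  rw [show f - g + g = f from funext fun u => funext fun w => Nat.sub_add_cancel (h u w)] at hsum
  linarith

variable {N : Network V} {y z : V} {f : V → V → ℕ}

lemma IsFlow.netOutflow_eq_zero (hf : IsFlow N y z f) {v : V} (hy : v ≠ y) (hz : v ≠ z) :
    netOutflow f v = 0 := by
  simp [netOutflow, outflow, inflow, hf.2 v hy hz]

lemma isFlow_of_netOutflow (hc : ∀ u v, f u v ≤ N.c u v)
    (he : ∀ v, v ≠ y → v ≠ z → netOutflow f v = 0) : IsFlow N y z f :=
  ⟨hc, fun v hy hz => by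
    have := he v hy hz
    simp only [netOutflow, outflow, inflow, sub_eq_zero, Nat.cast_inj] at this
    exact this.symm⟩

variable [DecidableEq V]

lemma IsFlow.flowValue_eq_cut (hf : IsFlow N y z f) {S : Finset V}
    (hy : y ∈ S) (hz : z ∉ S) :
    flowValue f y = ∑ v ∈ S, ∑ u ∈ Sᶜ, (f v u : ℤ) - ∑ v ∈ S, ∑ u ∈ Sᶜ, (f u v : ℤ) := by
  have hvalue : flowValue f y = ∑ v ∈ S, netOutflow f v := by
    rw [flowValue_eq_netOutflow, sum_eq_single_of_mem y hy]
    exact fun v hv hvy => hf.netOutflow_eq_zero hvy (ne_of_mem_of_not_mem hv hz)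
  have hinner : ∑ v ∈ S, ∑ u ∈ S, (f v u : ℤ) = ∑ v ∈ S, ∑ u ∈ S, (f u v : ℤ) := sum_comm
  simp only [hvalue, netOutflow, outflow, inflow, ← sum_add_sum_compl S]
  push_cast
  rw [sum_sub_distrib, sum_add_distrib, sum_add_distrib, hinner]
  ring

lemma IsFlow.flowValue_le_cut (hf : IsFlow N y z f) {S : Finset V}
    (hy : y ∈ S) (hz : z ∉ S) :
    flowValue f y ≤ ∑ v ∈ S, ∑ u ∈ Sᶜ, (f v u : ℤ) := by
  rw [hf.flowValue_eq_cut hy hz, sub_le_self_iff]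
  positivity

lemma sum_count_fst (L : List (V × V)) (x : V) :
    ∑ u, L.count (x, u) = (L.map Prod.fst).count x := by
  induction L with
  | nil => simp
  | cons a L ih =>
    simp only [List.count_cons, List.map_cons, sum_add_distrib, ih, beq_iff_eq]
    rcases eq_or_ne a.1 x with h | h <;> simp [Prod.ext_iff, h]

lemma sum_count_snd (L : List (V × V)) (x : V) :
    ∑ u, L.count (u, x) = (L.map Prod.snd).count x := by
  induction L with
  | nil => simp
  | cons a L ih =>
    simp only [List.count_cons, List.map_cons, sum_add_distrib, ih, beq_iff_eq]
    rcases eq_or_ne a.2 x with h | h <;> simp [Prod.ext_iff, h]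

lemma outflow_chi (p : List V) (v : V) : outflow (chi p) v = p.dropLast.count v := by
  rw [← map_fst_pathArcs, ← sum_count_fst]
  rfl

lemma inflow_chi (p : List V) (v : V) : inflow (chi p) v = p.tail.count v := by
  rw [← map_snd_pathArcs, ← sum_count_snd]
  rfl

lemma netOutflow_chi {p : List V} {a b : V} (ha : p.head? = some a) (hb : p.getLast? = some b)
    (v : V) : netOutflow (chi p) v = (if v = a then 1 else 0) - (if v = b then 1 else 0) := by
  obtain ⟨t, rfl⟩ := List.head?_eq_some_iff.1 ha
  have hhead : (a :: t).count v = t.count v + if v = a then 1 else 0 := by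
    rcases eq_or_ne v a with rfl | h <;> simp [*, Ne.symm]
  have hlast : (a :: t).count v = (a :: t).dropLast.count v + if v = b then 1 else 0 := by
    conv_lhs => rw [← List.dropLast_append_getLast (List.cons_ne_nil a t)]
    rw [List.getLast?_eq_getLast (List.cons_ne_nil a t), Option.some_inj] at hb
    rcases eq_or_ne v b with rfl | h <;> simp [*, Ne.symm]
  rw [netOutflow, outflow_chi, inflow_chi, List.tail_cons]
  split_ifs at hhead hlast ⊢ <;> omega

end NetOutflow

section MaxFlow

variable {N : Network V} {y z : V} {f : V → V → ℕ}

lemma bddAbove_flowValues (N : Network V) (y z : V) :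
    BddAbove {m : ℕ | ∃ f, IsFlow N y z f ∧ flowValue f y = m} := by
  refine ⟨∑ u, N.c y u, ?_⟩
  rintro m ⟨f, hf, hm⟩
  have hout : ∑ u, (f y u : ℤ) ≤ ∑ u, (N.c y u : ℤ) :=
    sum_le_sum fun u _ => by exact_mod_cast hf.1 y u
  have hin : 0 ≤ ∑ u, (f u y : ℤ) := by positivity
  have : (m : ℤ) ≤ ∑ u, (N.c y u : ℤ) := by rw [← hm, flowValue]; linarith
  exact_mod_cast this

lemma exists_isMaxFlow (N : Network V) (y z : V) : ∃ f, IsMaxFlow N y z f := by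
  refine Nat.sSup_mem ?_ (bddAbove_flowValues N y z)
  exact ⟨0, 0, ⟨fun _ _ => Nat.zero_le _, fun _ _ _ => rfl⟩, by simp [flowValue]⟩

lemma IsFlow.flowValue_le_maxFlowValue (hf : IsFlow N y z f) :
    flowValue f y ≤ maxFlowValue N y z := by
  rcases le_or_gt (flowValue f y) 0 with hneg | hpos
  · exact hneg.trans (Nat.cast_nonneg _)
  · have hm : flowValue f y = (flowValue f y).toNat := (Int.toNat_of_nonneg hpos.le).symm
    rw [hm, Nat.cast_le]
    exact le_csSup (bddAbove_flowValues N y z) ⟨f, hf, hm⟩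

variable [DecidableEq V]

lemma IsFlow.of_removeVerts {X : Finset V} (hf : IsFlow (removeVerts N X) y z f) :
    IsFlow N y z f := by
  refine ⟨fun u v => (hf.1 u v).trans ?_, hf.2⟩
  simp only [removeVerts]
  split_ifs <;> simp

lemma IsFlow.eq_zero_of_removeVerts {X : Finset V} (hf : IsFlow (removeVerts N X) y z f)
    {u v : V} (h : u ∈ X ∨ v ∈ X) : f u v = 0 := by
  simpa [removeVerts, h] using hf.1 u v

lemma maxFlowValue_removeVerts_le (N : Network V) (X : Finset V) (y z : V) :
    maxFlowValue (removeVerts N X) y z ≤ maxFlowValue N y z := by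
  obtain ⟨g, hg, hgv⟩ := exists_isMaxFlow (removeVerts N X) y z
  exact_mod_cast hgv ▸ hg.of_removeVerts.flowValue_le_maxFlowValue

lemma phiDrop_nonneg (N : Network V) (y z : V) (X : Finset V) : 0 ≤ phiDrop N y z X :=
  sub_nonneg.2 (Nat.cast_le.2 (maxFlowValue_removeVerts_le N X y z))

lemma maxFlowValue_removeVerts_eq_zero (N : Network V) (hyz : y ≠ z) {x : V}
    (hx : x = y ∨ x = z) : maxFlowValue (removeVerts N {x}) y z = 0 := by
  obtain ⟨g, hg, hgv⟩ := exists_isMaxFlow (removeVerts N {x}) y z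
  have hcut : flowValue g y ≤ 0 := by
    rcases hx with rfl | rfl
    · refine (hg.flowValue_le_cut (mem_singleton_self x) (by simpa using hyz.symm)).trans_eq ?_
      simp [hg.eq_zero_of_removeVerts (Or.inl (mem_singleton_self x))]
    · refine (hg.flowValue_le_cut (S := {x}ᶜ) (by simpa using hyz) (by simp)).trans_eq ?_
      simp [hg.eq_zero_of_removeVerts (Or.inr (mem_singleton_self x))]
  omega

lemma IsFlow.reflTransGen_of_flowValue_pos (hf : IsFlow N y z f) (hpos : 0 < flowValue f y) :
    Relation.ReflTransGen (fun u v => 0 < f u v) y z := by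
  classical
  by_contra hz
  set S := univ.filter (Relation.ReflTransGen (fun u v => 0 < f u v) y)
  have hcut := hf.flowValue_le_cut (S := S) (by simpa [S] using Relation.ReflTransGen.refl)
    (by simpa [S] using hz)
  have hzero : ∑ v ∈ S, ∑ u ∈ Sᶜ, (f v u : ℤ) = 0 := by
    refine sum_eq_zero fun v hv => sum_eq_zero fun u hu => ?_
    simp only [S, mem_compl, mem_filter, mem_univ, true_and] at hv hu
    by_contra hne
    exact hu (hv.tail (Nat.pos_of_ne_zero (by exact_mod_cast hne)))
  omega

end MaxFlow

variable [DecidableEq V]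

section PathSequences

variable {N : Network V} {y z : V}

lemma netOutflow_seqFlow {γ : List (List V)} (hγ : ∀ p ∈ γ, IsPath N y z p) (v : V) :
    netOutflow (seqFlow γ) v = γ.length * ((if v = y then 1 else 0) - if v = z then 1 else 0) := by
  induction γ with
  | nil => simp [netOutflow, outflow, inflow, seqFlow]
  | cons p γ ih =>
    obtain ⟨-, hnd, hy, hz, -⟩ := hγ p List.mem_cons_self
    rw [seqFlow_cons hnd, netOutflow_add, netOutflow_chi hy hz,
      ih fun q hq => hγ q (List.mem_cons_of_mem p hq)]
    push_cast [List.length_cons]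
    ring

lemma IsPathSeq.isFlow {γ : List (List V)} (hγ : IsPathSeq N y z γ) :
    IsFlow N y z (seqFlow γ) :=
  isFlow_of_netOutflow hγ.2 fun v hy hz => by simp [netOutflow_seqFlow hγ.1, hy, hz]

lemma IsPathSeq.flowValue_seqFlow (hyz : y ≠ z) {γ : List (List V)} (hγ : IsPathSeq N y z γ) :
    flowValue (seqFlow γ) y = γ.length := by
  simp [flowValue_eq_netOutflow, netOutflow_seqFlow hγ.1, hyz]

lemma IsPathSeq.length_le (hyz : y ≠ z) {γ : List (List V)} (hγ : IsPathSeq N y z γ) :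
    γ.length ≤ maxFlowValue N y z := by
  exact_mod_cast hγ.flowValue_seqFlow hyz ▸ hγ.isFlow.flowValue_le_maxFlowValue

lemma IsFlow.exists_pathSeq (hyz : y ≠ z) {f : V → V → ℕ} (hf : IsFlow N y z f) (k : ℕ)
    (hk : flowValue f y = k) :
    ∃ γ : List (List V), IsPathSeq N y z γ ∧ γ.length = k ∧ seqFlow γ ≤ f := by
  induction k generalizing f with
  | zero => exact ⟨[], ⟨by simp, fun u v => by simp⟩, rfl, fun u v => by simp [seqFlow]⟩
  | succ k ih =>
    obtain ⟨l, hc, hnd, hz⟩ := List.exists_nodup_isChain_cons_of_relationReflTransGen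
      (hf.reflTransGen_of_flowValue_pos (by omega))
    have hchi : chi (y :: l) ≤ f := fun u v => by
      rw [chi_eq_ite hnd]
      split_ifs with h
      exacts [rel_of_mem_pathArcs hc h, Nat.zero_le _]
    have hpath : IsPath N y z (y :: l) :=
      isPath_of_isChain hyz (hc.imp fun u v h => h.trans_le (hf.1 u v)) hnd hz
    have hnet (v : V) : netOutflow (f - chi (y :: l)) v
        = netOutflow f v - ((if v = y then 1 else 0) - if v = z then 1 else 0) := by
      rw [netOutflow_sub hchi, netOutflow_chi rfl hz]
    have hg : IsFlow N y z (f - chi (y :: l)) :=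
      isFlow_of_netOutflow (fun u v => (Nat.sub_le _ _).trans (hf.1 u v)) fun v hvy hvz => by
        simp [hnet, hf.netOutflow_eq_zero hvy hvz, hvy, hvz]
    obtain ⟨γ, hγ, hlen, hle⟩ := ih hg <| by
      rw [flowValue_eq_netOutflow, hnet, ← flowValue_eq_netOutflow, hk]
      simp [hyz]
    have hle' : seqFlow ((y :: l) :: γ) ≤ f := by
      rw [seqFlow_cons hnd, ← add_tsub_cancel_of_le hchi]
      exact add_le_add le_rfl hle
    refine ⟨(y :: l) :: γ, ⟨?_, fun u v => (hle' u v).trans (hf.1 u v)⟩, by simp [hlen], hle'⟩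
    exact List.forall_mem_cons.2 ⟨hpath, hγ.1⟩

lemma maxSeqLen_eq_maxFlowValue (hyz : y ≠ z) : maxSeqLen N y z = maxFlowValue N y z := by
  refine IsGreatest.csSup_eq ⟨?_, ?_⟩
  · obtain ⟨f, hf, hfv⟩ := exists_isMaxFlow N y z
    obtain ⟨γ, hγ, hlen, -⟩ := hf.exists_pathSeq hyz _ hfv
    exact ⟨γ, hγ, hlen⟩
  · rintro _ ⟨γ, hγ, rfl⟩
    exact hγ.length_le hyz

lemma IsMaxFlow.exists_mem_maxSeqs (hyz : y ≠ z) {f : V → V → ℕ} (hf : IsMaxFlow N y z f) :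
    ∃ γ ∈ MaxSeqs N y z, seqFlow γ ≤ f := by
  obtain ⟨γ, hγ, hlen, hle⟩ := hf.1.exists_pathSeq hyz _ hf.2
  exact ⟨γ, ⟨hγ, hlen.trans (maxSeqLen_eq_maxFlowValue hyz).symm⟩, hle⟩

lemma lX_singleton_le_outflow_seqFlow {x : V} (hxz : x ≠ z) {γ : List (List V)}
    (hγ : ∀ p ∈ γ, IsPath N y z p) : lX {x} γ ≤ outflow (seqFlow γ) x := by
  induction γ with
  | nil => simp [lX]
  | cons p γ ih =>
    obtain ⟨-, hnd, -, hz, -⟩ := hγ p List.mem_cons_self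
    have ih := ih fun q hq => hγ q (List.mem_cons_of_mem p hq)
    rw [seqFlow_cons hnd, outflow_add, outflow_chi]
    simp only [lX, List.countP_cons] at ih ⊢
    split_ifs with hx
    · have hxp : x ∈ p.dropLast :=
        List.mem_dropLast_of_mem_of_ne_getLast? (by simpa using hx) (by simpa [hz] using hxz)
      have := List.count_pos_iff.2 hxp
      omega
    · omega

lemma maxFlowValue_le_add_lX (hyz : y ≠ z) {γ : List (List V)} (hγ : γ ∈ MaxSeqs N y z)
    (X : Finset V) : maxFlowValue N y z ≤ maxFlowValue (removeVerts N X) y z + lX X γ := by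
  have hsplit := List.length_eq_countP_add_countP (fun p => p.any fun x => decide (x ∈ X)) (l := γ)
  have havoid : (γ.filter fun p => !p.any fun x => decide (x ∈ X)).length
      = γ.countP fun p => decide ¬(p.any fun x => decide (x ∈ X)) = true := by
    rw [List.countP_eq_length_filter]
    exact congrArg List.length (List.filter_congr fun p _ => by
      cases p.any fun x => decide (x ∈ X) <;> rfl)
  have := (hγ.1.filter_avoiding X).length_le hyz
  rw [← maxSeqLen_eq_maxFlowValue hyz, ← hγ.2, hsplit, lX]
  omega

end PathSequences

section Augmentation

variable {N : Network V} {y z : V}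

def ResidualArc (N : Network V) (f : V → V → ℕ) (u v : V) : Prop :=
  f u v < N.c u v ∨ 0 < f v u

lemma IsFlow.flowValue_le_of_not_reflTransGen {f g : V → V → ℕ} (hf : IsFlow N y z f)
    (hg : IsFlow N y z g) (hz : ¬Relation.ReflTransGen (ResidualArc N f) y z) :
    flowValue g y ≤ flowValue f y := by
  classical
  set S := univ.filter (Relation.ReflTransGen (ResidualArc N f) y)
  have hyS : y ∈ S := by simpa [S] using Relation.ReflTransGen.refl
  have hzS : z ∉ S := by simpa [S] using hz
  have hsat : ∀ v ∈ S, ∀ u ∈ Sᶜ, f v u = N.c v u ∧ f u v = 0 := by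
    intro v hv u hu
    simp only [S, mem_compl, mem_filter, mem_univ, true_and] at hv hu
    have : ¬ResidualArc N f v u := fun h => hu (hv.tail h)
    simp only [ResidualArc, not_or, not_lt, Nat.le_zero] at this
    exact ⟨le_antisymm (hf.1 v u) this.1, this.2⟩
  have hback : ∑ v ∈ S, ∑ u ∈ Sᶜ, (f u v : ℤ) = 0 :=
    sum_eq_zero fun v hv => sum_eq_zero fun u hu => by simp [(hsat v hv u hu).2]
  rw [hf.flowValue_eq_cut hyS hzS, hback, sub_zero]
  refine (hg.flowValue_le_cut hyS hzS).trans (sum_le_sum fun v hv => sum_le_sum fun u hu => ?_)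
  rw [(hsat v hv u hu).1]
  exact_mod_cast hg.1 v u

lemma ResidualArc.exists_push {f : V → V → ℕ} (hf : ∀ u v, f u v ≤ N.c u v) {a b : V}
    (hab : ResidualArc N f a b) :
    ∃ g : V → V → ℕ, (∀ u v, g u v ≤ N.c u v) ∧
      (∀ v, netOutflow g v = netOutflow f v + ((if v = a then 1 else 0) - if v = b then 1 else 0)) ∧
      (∀ v, outflow g v ≤ outflow f v + if v = a then 1 else 0) ∧
      ∀ u v, u ≠ a → v ≠ a → g u v = f u v := by
  rcases hab with hlt | hpos
  · refine ⟨f + chi [a, b], fun u v => ?_, fun v => ?_, fun v => ?_, fun u v hu _ => ?_⟩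
    · simp only [Pi.add_apply, chi_pair]
      split_ifs with h
      · obtain ⟨rfl, rfl⟩ := h
        omega
      · simpa using hf u v
    · rw [netOutflow_add, netOutflow_chi (b := b) rfl rfl]
    · rw [outflow_add, outflow_chi]
      rcases eq_or_ne v a with rfl | h <;> simp [*, Ne.symm]
    · simp [chi_pair, hu]
  · have hle : chi [b, a] ≤ f := fun u v => by
      rw [chi_pair]
      split_ifs with h
      · obtain ⟨rfl, rfl⟩ := h
        exact hpos
      · exact Nat.zero_le _
    refine ⟨f - chi [b, a], fun u v => (Nat.sub_le _ _).trans (hf u v), fun v => ?_, fun v => ?_,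
      fun u v _ hv => ?_⟩
    · rw [netOutflow_sub hle, netOutflow_chi (b := a) rfl rfl]
      ring
    · exact (outflow_mono (fun u w => Nat.sub_le _ _) v).trans (Nat.le_add_right _ _)
    · simp [chi_pair, hv]

lemma exists_augment_along_chain {f : V → V → ℕ} (hf : ∀ u v, f u v ≤ N.c u v) {a b : V}
    {l : List V} (hc : (a :: l).IsChain (ResidualArc N f)) (hnd : (a :: l).Nodup)
    (hb : (a :: l).getLast? = some b) :
    ∃ g : V → V → ℕ, (∀ u v, g u v ≤ N.c u v) ∧
      (∀ v, netOutflow g v = netOutflow f v + ((if v = a then 1 else 0) - if v = b then 1 else 0)) ∧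
      ∀ v, outflow g v ≤ outflow f v + if v ∈ a :: l then 1 else 0 := by
  induction l generalizing a f with
  | nil =>
    obtain rfl : a = b := by simpa using hb
    exact ⟨f, hf, fun v => by ring, fun v => Nat.le_add_right _ _⟩
  | cons c l ih =>
    rw [List.isChain_cons_cons] at hc
    obtain ⟨ha, hnd'⟩ := List.nodup_cons.1 hnd
    obtain ⟨f₁, hf₁, hnet₁, hout₁, hagree⟩ := hc.1.exists_push hf
    -- the rest of the chain avoids `a`, so pushing along `(a, c)` keeps its arcs residual
    have hc₁ : (c :: l).IsChain (ResidualArc N f₁) := hc.2.imp_of_mem_imp fun u v hu hv h => by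
      have hua : u ≠ a := fun h => ha (h ▸ hu)
      have hva : v ≠ a := fun h => ha (h ▸ hv)
      simpa [ResidualArc, hagree u v hua hva, hagree v u hva hua] using h
    obtain ⟨g, hg, hnetg, houtg⟩ := ih hf₁ hc₁ hnd' (by simpa using hb)
    refine ⟨g, hg, fun v => by rw [hnetg, hnet₁]; ring, fun v => ?_⟩
    have h₁ := houtg v
    have h₂ := hout₁ v
    by_cases hva : v = a
    · subst hva
      simp [ha] at h₁ h₂ ⊢
      omega
    · simp [hva] at h₁ h₂ ⊢
      omega

lemma IsFlow.exists_augment (hyz : y ≠ z) {f : V → V → ℕ} (hf : IsFlow N y z f)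
    (hlt : flowValue f y < maxFlowValue N y z) :
    ∃ g, IsFlow N y z g ∧ flowValue g y = flowValue f y + 1 ∧
      ∀ v, outflow g v ≤ outflow f v + 1 := by
  obtain ⟨f₀, hf₀, hv₀⟩ := exists_isMaxFlow N y z
  have hreach : Relation.ReflTransGen (ResidualArc N f) y z := by
    by_contra h
    have := hf.flowValue_le_of_not_reflTransGen hf₀ h
    omega
  obtain ⟨l, hc, hnd, hz⟩ := List.exists_nodup_isChain_cons_of_relationReflTransGen hreach
  obtain ⟨g, hg, hnet, hout⟩ := exists_augment_along_chain hf.1 hc hnd hz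
  refine ⟨g, isFlow_of_netOutflow hg fun v hvy hvz => ?_, ?_, fun v => (hout v).trans ?_⟩
  · simp [hnet, hf.netOutflow_eq_zero hvy hvz, hvy, hvz]
  · simp [flowValue_eq_netOutflow, hnet, hyz]
  · split_ifs <;> simp

lemma IsFlow.exists_isMaxFlow_outflow_le (hyz : y ≠ z) {f : V → V → ℕ} (hf : IsFlow N y z f)
    {k : ℕ} (hk : flowValue f y = k) (x : V) :
    ∃ g, IsMaxFlow N y z g ∧ outflow g x ≤ outflow f x + (maxFlowValue N y z - k) := by
  induction hd : maxFlowValue N y z - k generalizing f k with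
  | zero =>
    have := hf.flowValue_le_maxFlowValue
    exact ⟨f, ⟨hf, by omega⟩, by simp⟩
  | succ d ih =>
    obtain ⟨g, hg, hgv, hgout⟩ := hf.exists_augment hyz (by omega)
    obtain ⟨h, hh, hhx⟩ := ih hg (k := k + 1) (by rw [hgv, hk]; push_cast; ring) (by omega)
    exact ⟨h, hh, by have := hgout x; omega⟩

end Augmentation

section VertexFlow

variable {N : Network V} {y z : V}

lemma vertexFlow_of_endpoint (f : V → V → ℕ) {x : V} (hx : x = y ∨ x = z) :
    vertexFlow f y z x = flowValue f y :=
  if_pos hx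

lemma vertexFlow_of_ne (f : V → V → ℕ) {x : V} (hy : x ≠ y) (hz : x ≠ z) :
    vertexFlow f y z x = outflow f x := by
  simp [vertexFlow, hy, hz, outflow]

lemma exists_isMaxFlow_vertexFlow_le_phiDrop (hyz : y ≠ z) (x : V) :
    ∃ f, IsMaxFlow N y z f ∧ vertexFlow f y z x ≤ phiDrop N y z {x} := by
  by_cases hx : x = y ∨ x = z
  · obtain ⟨f, hf⟩ := exists_isMaxFlow N y z
    refine ⟨f, hf, ?_⟩
    rw [vertexFlow_of_endpoint f hx, hf.2, phiDrop, maxFlowValue_removeVerts_eq_zero N hyz hx]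
    simp
  · obtain ⟨hxy, hxz⟩ := not_or.1 hx
    obtain ⟨g, hg, hgv⟩ := exists_isMaxFlow (removeVerts N {x}) y z
    obtain ⟨f, hf, hfx⟩ := hg.of_removeVerts.exists_isMaxFlow_outflow_le hyz hgv x
    have hgx : outflow g x = 0 :=
      sum_eq_zero fun u _ => hg.eq_zero_of_removeVerts (Or.inl (mem_singleton_self x))
    have := maxFlowValue_removeVerts_le N {x} y z
    refine ⟨f, hf, ?_⟩
    rw [vertexFlow_of_ne f hxy hxz, phiDrop]
    omega

lemma lX_singleton_le_vertexFlow (hyz : y ≠ z) {f : V → V → ℕ} (hf : IsMaxFlow N y z f)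
    {γ : List (List V)} (hγ : γ ∈ MaxSeqs N y z) (hle : seqFlow γ ≤ f) (x : V) :
    (lX {x} γ : ℤ) ≤ vertexFlow f y z x := by
  by_cases hx : x = y ∨ x = z
  · rw [vertexFlow_of_endpoint f hx, hf.2, ← maxSeqLen_eq_maxFlowValue hyz, ← hγ.2]
    exact_mod_cast List.countP_le_length
  · obtain ⟨hxy, hxz⟩ := not_or.1 hx
    rw [vertexFlow_of_ne f hxy hxz]
    exact_mod_cast (lX_singleton_le_outflow_seqFlow hxz hγ.1.1).trans (outflow_mono hle x)

lemma phiDrop_le_lX (hyz : y ≠ z) {γ : List (List V)} (hγ : γ ∈ MaxSeqs N y z) (x : V) :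
    phiDrop N y z {x} ≤ lX {x} γ := by
  have := maxFlowValue_le_add_lX hyz hγ {x}
  rw [phiDrop]
  omega

lemma IsMaxFlow.phiDrop_le_vertexFlow (hyz : y ≠ z) {f : V → V → ℕ} (hf : IsMaxFlow N y z f)
    (x : V) : phiDrop N y z {x} ≤ vertexFlow f y z x := by
  obtain ⟨γ, hγ, hle⟩ := hf.exists_mem_maxSeqs hyz
  exact (phiDrop_le_lX hyz hγ x).trans (lX_singleton_le_vertexFlow hyz hf hγ hle x)

lemma lambdaX_singleton_eq_phiDrop (hyz : y ≠ z) (x : V) :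
    (lambdaX N y z {x} : ℤ) = phiDrop N y z {x} := by
  refine natCast_sInf_eq ?_ ?_
  · obtain ⟨f, hf, hfx⟩ := exists_isMaxFlow_vertexFlow_le_phiDrop hyz x
    obtain ⟨γ, hγ, hle⟩ := hf.exists_mem_maxSeqs hyz
    exact ⟨_, ⟨γ, hγ, rfl⟩, (lX_singleton_le_vertexFlow hyz hf hγ hle x).trans hfx⟩
  · rintro _ ⟨γ, hγ, rfl⟩
    exact phiDrop_le_lX hyz hγ x

lemma deltaX_singleton_eq_phiDrop (hyz : y ≠ z) (x : V) :
    (deltaX N y z {x} : ℤ) = phiDrop N y z {x} := by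
  refine natCast_sInf_eq ?_ ?_
  · obtain ⟨f, hf, hfx⟩ := exists_isMaxFlow_vertexFlow_le_phiDrop hyz x
    have hnonneg := (phiDrop_nonneg N y z {x}).trans (hf.phiDrop_le_vertexFlow hyz x)
    refine ⟨(vertexFlow f y z x).toNat, ⟨f, hf, ?_⟩, ?_⟩ <;>
      simp [Int.toNat_of_nonneg hnonneg, hfx]
  · rintro _ ⟨f, hf, hsum⟩
    rw [sum_singleton] at hsum
    exact hsum ▸ hf.phiDrop_le_vertexFlow hyz x

end VertexFlow

end NetFlow

theorem lambda_eq_phiDrop_eq_delta_general {V : Type*} [Fintype V] [DecidableEq V]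
    (N : Network V) (x y z : V) (hyz : y ≠ z) :
    (NetFlow.lambdaX N y z {x} : ℤ) = NetFlow.phiDrop N y z {x} ∧
      NetFlow.phiDrop N y z {x} = (NetFlow.deltaX N y z {x} : ℤ) :=
  ⟨NetFlow.lambdaX_singleton_eq_phiDrop hyz x, (NetFlow.deltaX_singleton_eq_phiDrop hyz x).symm⟩

/-- `λ^N_{yz}(x) = φ^N_{yz}(x) = δ^N_{yz}(x)`. -/
theorem lambda_eq_phiDrop_eq_delta {V : Type*} [Fintype V] [DecidableEq V]
    (hV : 2 ≤ Fintype.card V) (N : Network V) (x y z : V) (hyz : y ≠ z) :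
    (NetFlow.lambdaX N y z {x} : ℤ) = NetFlow.phiDrop N y z {x} ∧
      NetFlow.phiDrop N y z {x} = (NetFlow.deltaX N y z {x} : ℤ) :=
  lambda_eq_phiDrop_eq_delta_general N x y z hyz
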